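/- arXiv:1312.2227 — 6 statements merged into one kernel-verified Lean document; each statement's English description precedes it below -/
import Mathlib

section
/- Let K ≥ 1 and let m, n, c : Fin K → ℝ be finite sequences such that m is monotone nondecreasing with m_k ≥ 0 for all k, n is monotone nonincreasing with n_k > 0 for all k, and c is monotone nonincreasing with c_k > 0 for all k. Then (∑_{k} n_k m_k)² / (∑_{k} n_k² c_k) ≤ (∑_{k} m_k)² / (∑_{k} c_k). -/
/-- Abstract deflection comparison `D_Wu ≤ D_CR`:
for `m` nondecreasing nonnegative, `n` positive nonincreasing and `c` positive
nonincreasing, `(∑ n m)² / (∑ n² c) ≤ (∑ m)² / (∑ c)`. -/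
theorem deflection_Wu_le_CR_abstract (K : ℕ) (hK : 1 ≤ K) (m n c : Fin K → ℝ)
    (hm : Monotone m) (hm0 : ∀ k, 0 ≤ m k)
    (hn : Antitone n) (hn0 : ∀ k, 0 < n k)
    (hc : Antitone c) (hc0 : ∀ k, 0 < c k) :
    (∑ k, n k * m k) ^ 2 / (∑ k, (n k) ^ 2 * c k)
      ≤ (∑ k, m k) ^ 2 / (∑ k, c k) := by
  have hKpos : (0:ℝ) < K := by exact_mod_cast hK
  set A := ∑ k, m k with hA
  set B := ∑ k, n k with hB
  set C := ∑ k, c k with hC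
  set S := ∑ k, (n k) ^ 2 with hS
  set T := ∑ k, n k * m k with hT
  set U := ∑ k, (n k) ^ 2 * c k with hU
  have hne : (Finset.univ : Finset (Fin K)).Nonempty := by
    rw [Finset.univ_nonempty_iff]
    exact Fin.pos_iff_nonempty.mp hK
  have hCpos : 0 < C := Finset.sum_pos (fun k _ => hc0 k) hne
  have hUpos : 0 < U := Finset.sum_pos (fun k _ => mul_pos (pow_pos (hn0 k) 2) (hc0 k)) hne
  have hTnn : 0 ≤ T := Finset.sum_nonneg (fun k _ => mul_nonneg (hn0 k).le (hm0 k))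
  have hAnn : 0 ≤ A := Finset.sum_nonneg (fun k _ => hm0 k)
  -- Chebyshev for antivarying n, m : K * T ≤ B * A
  have hanti : Antivary n m := fun i j hij => hn (hm.reflect_lt hij).le
  have h1 : (K:ℝ) * T ≤ B * A := by
    have := hanti.card_mul_sum_le_sum_mul_sum
    simpa using this
  -- Chebyshev for monovarying n², c : S * C ≤ K * U
  have hmono : Monovary (fun k => (n k)^2) c := by
    intro i j hij
    have hji : j ≤ i := by
      by_contra h
      exact absurd (hc (le_of_not_ge h)) (not_le.mpr hij)
    exact pow_le_pow_left₀ (hn0 i).le (hn hji) 2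
  have h2 : S * C ≤ (K:ℝ) * U := by
    have := hmono.sum_mul_sum_le_card_mul_sum
    simpa using this
  -- Cauchy-Schwarz : B² ≤ K * S
  have h3 : B ^ 2 ≤ (K:ℝ) * S := by
    have := sq_sum_le_card_mul_sum_sq (s := (Finset.univ : Finset (Fin K))) (f := n)
    simpa using this
  rw [div_le_div_iff₀ hUpos hCpos]
  -- suffices: T² * C * K² ≤ A² * U * K²
  have key : T ^ 2 * C * (K:ℝ)^2 ≤ A ^ 2 * U * (K:ℝ)^2 := by
    have e1 : ((K:ℝ) * T)^2 ≤ (B * A)^2 := by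
      apply pow_le_pow_left₀ (by positivity) h1
    calc T ^ 2 * C * (K:ℝ)^2 = ((K:ℝ)*T)^2 * C := by ring
      _ ≤ (B * A)^2 * C := by
          exact mul_le_mul_of_nonneg_right e1 hCpos.le
      _ = A^2 * (B^2 * C) := by ring
      _ ≤ A^2 * ((K:ℝ) * S * C) := by
          have : B^2 * C ≤ (K:ℝ) * S * C := mul_le_mul_of_nonneg_right h3 hCpos.le
          exact mul_le_mul_of_nonneg_left this (by positivity)
      _ = A^2 * (K:ℝ) * (S * C) := by ring
      _ ≤ A^2 * (K:ℝ) * ((K:ℝ) * U) := by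
          apply mul_le_mul_of_nonneg_left h2 (by positivity)
      _ = A ^ 2 * U * (K:ℝ)^2 := by ring
  have hK2 : (0:ℝ) < (K:ℝ)^2 := by positivity
  exact le_of_mul_le_mul_right key hK2
end

section
/- Let K ≥ 1 and let m, n, c : Fin K → ℝ be finite sequences such that m is monotone nondecreasing with m_k ≥ 0 for all k, n is monotone nonincreasing with n_k > 0 for all k, and c is monotone nonincreasing with c_k > 0 for all k. Then the strengthened bound holds: ((∑_k n_k m_k)² / (∑_k n_k² c_k)) · (K · (∑_k n_k²)) / (∑_k n_k)² ≤ (∑_k m_k)² / (∑_k c_k). -/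
/-- Strengthened deflection comparison: the intermediate inequality
`D_Wu · (√K ‖n‖₂ / ‖n‖₁)² ≤ D_CR`. -/
theorem deflection_Wu_le_CR_strengthened (K : ℕ) (hK : 1 ≤ K) (m n c : Fin K → ℝ)
    (hm : Monotone m) (hm0 : ∀ k, 0 ≤ m k)
    (hn : Antitone n) (hn0 : ∀ k, 0 < n k)
    (hc : Antitone c) (hc0 : ∀ k, 0 < c k) :
    ((∑ k, n k * m k) ^ 2 / (∑ k, (n k) ^ 2 * c k)) * ((K : ℝ) * ∑ k, (n k) ^ 2)
        / (∑ k, n k) ^ 2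
      ≤ (∑ k, m k) ^ 2 / (∑ k, c k) := by
  have hKpos : (0:ℝ) < K := by exact_mod_cast hK
  have hNe : Nonempty (Fin K) := ⟨⟨0, hK⟩⟩
  have hcard : (Fintype.card (Fin K) : ℝ) = (K : ℝ) := by simp
  -- Chebyshev: n and m antivary
  have h1 : (K : ℝ) * ∑ k, n k * m k ≤ (∑ k, n k) * ∑ k, m k := by
    have : Antivary n m := fun i j hij => hn (le_of_lt (lt_of_not_ge fun h => absurd (hm h) (not_le_of_gt hij)))
    have := this.card_mul_sum_le_sum_mul_sum
    rwa [hcard] at this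
  -- Chebyshev: n² and c monovary (both antitone)
  have h2 : (∑ k, (n k)^2) * ∑ k, c k ≤ (K : ℝ) * ∑ k, (n k)^2 * c k := by
    have hmono : Monovary (fun k => (n k)^2) c := by
      intro i j hij
      have hji : j ≤ i := by
        by_contra h
        exact absurd (hc (le_of_not_ge h)) (not_le_of_gt hij)
      exact pow_le_pow_left₀ (le_of_lt (hn0 i)) (hn hji) 2
    have := hmono.sum_mul_sum_le_card_mul_sum
    rwa [hcard] at this
  have hA : (0:ℝ) ≤ ∑ k, n k * m k :=
    Finset.sum_nonneg fun k _ => mul_nonneg (le_of_lt (hn0 k)) (hm0 k)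
  have hB : (0:ℝ) < ∑ k, (n k)^2 * c k :=
    Finset.sum_pos (fun k _ => mul_pos (pow_pos (hn0 k) 2) (hc0 k)) Finset.univ_nonempty
  have hC : (0:ℝ) < ∑ k, c k := Finset.sum_pos (fun k _ => hc0 k) Finset.univ_nonempty
  have hN1 : (0:ℝ) < ∑ k, n k := Finset.sum_pos (fun k _ => hn0 k) Finset.univ_nonempty
  have hN2 : (0:ℝ) < ∑ k, (n k)^2 :=
    Finset.sum_pos (fun k _ => pow_pos (hn0 k) 2) Finset.univ_nonempty
  have hM : (0:ℝ) ≤ ∑ k, m k := Finset.sum_nonneg fun k _ => hm0 k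
  rw [div_mul_eq_mul_div, div_div, div_le_div_iff₀ (by positivity) hC]
  nlinarith [mul_le_mul h1 h1 (by positivity) (by positivity),
    mul_le_mul h2 (le_refl ((∑ k, n k * m k)^2)) (by positivity) (by positivity),
    sq_nonneg (∑ k, n k * m k), mul_pos hN2 hC, mul_nonneg hA hM]
end

section
/- Let K ≥ 1, let P_e : Fin K → ℝ satisfy 0 ≤ P_{e,k} ≤ 1/2 for all k and P_{e,k} ≥ P_{e,k+1} (nonincreasing in k), and let 0 < P_F < P_D < 1. Define α_k(P) = (1 − 2P_{e,k})·P + P_{e,k}, m_k = (1 − 2P_{e,k})(P_D − P_F), n_k = 1 + 2P_{e,k}, and for i ∈ {0,1} set c_{i,k} = α_k(P_i)(1 − α_k(P_i)) where P_0 = P_F and P_1 = P_D. Then for each i ∈ {0,1}: (∑_k n_k m_k)² / (∑_k n_k² c_{i,k}) ≤ (∑_k m_k)² / (∑_k c_{i,k}), i.e., D_Wu,i ≤ D_CR,i. -/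
/-- General Chebyshev-style deflection comparison lemma. -/
lemma key_deflection (K : ℕ) (hK : 1 ≤ K) (n m c : Fin K → ℝ)
    (hn1 : ∀ k, 1 ≤ n k) (hm0 : ∀ k, 0 ≤ m k) (hc0 : ∀ k, 0 < c k)
    (hanti : Antivary n m) (hmono : Monovary (fun k => n k ^ 2) c) :
    (∑ k, n k * m k) ^ 2 / (∑ k, n k ^ 2 * c k)
      ≤ (∑ k, m k) ^ 2 / (∑ k, c k) := by
  have hKpos : (0 : ℝ) < K := by exact_mod_cast hK
  set S := ∑ k, n k * m k with hS
  set T := ∑ k, m k with hT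
  set N := ∑ k, n k with hN
  set Q := ∑ k, n k ^ 2 with hQ
  set A := ∑ k, c k with hA
  set B := ∑ k, n k ^ 2 * c k with hB
  have hApos : 0 < A := Finset.sum_pos (fun k _ => hc0 k)
    (Finset.univ_nonempty_iff.2 ⟨⟨0, hK⟩⟩)
  have hBpos : 0 < B := Finset.sum_pos
    (fun k _ => mul_pos (pow_pos (lt_of_lt_of_le one_pos (hn1 k)) 2) (hc0 k))
    (Finset.univ_nonempty_iff.2 ⟨⟨0, hK⟩⟩)
  have hS0 : 0 ≤ S := Finset.sum_nonneg fun k _ =>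
    mul_nonneg (le_trans zero_le_one (hn1 k)) (hm0 k)
  have hT0 : 0 ≤ T := Finset.sum_nonneg fun k _ => hm0 k
  have hN0 : 0 ≤ N := Finset.sum_nonneg fun k _ => le_trans zero_le_one (hn1 k)
  have hcheb1 : (K : ℝ) * S ≤ N * T := by
    have := hanti.card_mul_sum_le_sum_mul_sum
    simpa using this
  have hcauchy : N ^ 2 ≤ (K : ℝ) * Q := by
    have := sq_sum_le_card_mul_sum_sq (s := Finset.univ) (f := n)
    simpa using this
  have hcheb2 : Q * A ≤ (K : ℝ) * B := by
    have := hmono.sum_mul_sum_le_card_mul_sum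
    simpa using this
  rw [div_le_div_iff₀ hBpos hApos]
  have e1 : ((K : ℝ) * S) ^ 2 ≤ (N * T) ^ 2 :=
    pow_le_pow_left₀ (by positivity) hcheb1 2
  have e2 : (K : ℝ) ^ 2 * S ^ 2 ≤ (K : ℝ) * Q * T ^ 2 := by
    calc (K : ℝ) ^ 2 * S ^ 2 = ((K : ℝ) * S) ^ 2 := by ring
    _ ≤ (N * T) ^ 2 := e1
    _ = N ^ 2 * T ^ 2 := by ring
    _ ≤ (K : ℝ) * Q * T ^ 2 := mul_le_mul_of_nonneg_right hcauchy (sq_nonneg T)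
  have e3 : (K : ℝ) * S ^ 2 ≤ Q * T ^ 2 := by nlinarith
  have e4 : (K : ℝ) * (S ^ 2 * A) ≤ (K : ℝ) * (T ^ 2 * B) := by
    calc (K : ℝ) * (S ^ 2 * A) = ((K : ℝ) * S ^ 2) * A := by ring
    _ ≤ (Q * T ^ 2) * A := mul_le_mul_of_nonneg_right e3 hApos.le
    _ = T ^ 2 * (Q * A) := by ring
    _ ≤ T ^ 2 * ((K : ℝ) * B) := mul_le_mul_of_nonneg_left hcheb2 (sq_nonneg T)
    _ = (K : ℝ) * (T ^ 2 * B) := by ring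
  have := le_of_mul_le_mul_left e4 hKpos
  linarith

/-- Concrete deflection comparison `D_Wu,i ≤ D_CR,i` for the sensor-network model:
`α_k(P) = (1 − 2·P_{e,k})·P + P_{e,k}`, `m_k = (1 − 2·P_{e,k})·(P_D − P_F)`,
`n_k = 1 + 2·P_{e,k}`, `c_{i,k} = α_k(P_i)·(1 − α_k(P_i))` with `P_0 = P_F`, `P_1 = P_D`. -/
theorem deflection_Wu_le_CR_sensors (K : ℕ) (hK : 1 ≤ K) (Pe : Fin K → ℝ)
    (hPe0 : ∀ k, 0 ≤ Pe k) (hPe2 : ∀ k, Pe k ≤ 1 / 2) (hPemono : Antitone Pe)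
    (PF PD : ℝ) (hPF : 0 < PF) (hPFD : PF < PD) (hPD : PD < 1) :
    ∀ Pi : ℝ, Pi = PF ∨ Pi = PD →
      (∑ k, (1 + 2 * Pe k) * ((1 - 2 * Pe k) * (PD - PF))) ^ 2 /
          (∑ k, (1 + 2 * Pe k) ^ 2 *
            (((1 - 2 * Pe k) * Pi + Pe k) * (1 - ((1 - 2 * Pe k) * Pi + Pe k))))
        ≤ (∑ k, (1 - 2 * Pe k) * (PD - PF)) ^ 2 /
          (∑ k, ((1 - 2 * Pe k) * Pi + Pe k) * (1 - ((1 - 2 * Pe k) * Pi + Pe k))) := by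
  intro Pi hPi
  have hPi0 : 0 < Pi := by rcases hPi with h | h <;> subst h <;> linarith
  have hPi1 : Pi < 1 := by rcases hPi with h | h <;> subst h <;> linarith
  have hn_anti : Antitone fun k : Fin K => 1 + 2 * Pe k := fun a b hab => by
    have := hPemono hab
    show 1 + 2 * Pe b ≤ 1 + 2 * Pe a
    linarith
  have hm_mono : Monotone fun k : Fin K => (1 - 2 * Pe k) * (PD - PF) := fun a b hab => by
    have := hPemono hab
    show (1 - 2 * Pe a) * (PD - PF) ≤ (1 - 2 * Pe b) * (PD - PF)
    nlinarith
  have hn2_anti : Antitone fun k : Fin K => (1 + 2 * Pe k) ^ 2 := fun a b hab => by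
    have := hPemono hab
    have h1 := hPe0 a; have h2 := hPe0 b
    show (1 + 2 * Pe b) ^ 2 ≤ (1 + 2 * Pe a) ^ 2
    nlinarith
  have hc_anti : Antitone fun k : Fin K =>
      ((1 - 2 * Pe k) * Pi + Pe k) * (1 - ((1 - 2 * Pe k) * Pi + Pe k)) := fun a b hab => by
    have h := hPemono hab
    have h1 := hPe2 a; have h2 := hPe2 b
    have key : (1 - 2 * Pe a) ^ 2 ≤ (1 - 2 * Pe b) ^ 2 := by nlinarith
    have key2 := mul_le_mul_of_nonneg_right key (sq_nonneg (Pi - 1/2))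
    show ((1 - 2 * Pe b) * Pi + Pe b) * (1 - ((1 - 2 * Pe b) * Pi + Pe b))
        ≤ ((1 - 2 * Pe a) * Pi + Pe a) * (1 - ((1 - 2 * Pe a) * Pi + Pe a))
    nlinarith [key2]
  exact key_deflection K hK
    (fun k => 1 + 2 * Pe k)
    (fun k => (1 - 2 * Pe k) * (PD - PF))
    (fun k => ((1 - 2 * Pe k) * Pi + Pe k) * (1 - ((1 - 2 * Pe k) * Pi + Pe k)))
    (fun k => by have := hPe0 k; show 1 ≤ 1 + 2 * Pe k; linarith)
    (fun k => mul_nonneg (by have := hPe2 k; linarith) (by linarith))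
    (fun k => by
      have h1 := hPe0 k; have h2 := hPe2 k
      show 0 < ((1 - 2 * Pe k) * Pi + Pe k) * (1 - ((1 - 2 * Pe k) * Pi + Pe k))
      have t1 : (1 - 2 * Pe k) ^ 2 ≤ 1 := by nlinarith
      have t2 := mul_le_mul_of_nonneg_right t1 (sq_nonneg (Pi - 1/2))
      nlinarith [t2])
    (hn_anti.antivary hm_mono)
    (hn2_anti.monovary hc_anti)
end

section
/- Let K ≥ 1, let P_{e,k} ∈ [0, 1/2] and P_D ∈ [0,1], and define α_k = (1 − 2P_{e,k})·P_D + P_{e,k}. Let y_1, …, y_K be independent Bernoulli random variables with P(y_k = 1) = α_k, and define the estimator P̂_D = (1/K)·∑_{k=1}^{K} [(1 + 2P_{e,k})·y_k − P_{e,k}]. Then E[P̂_D] = (1/K)·∑_{k=1}^{K} [(1 − 4P_{e,k}²)·P_D + 2P_{e,k}²]. In particular, if some P_{e,k} > 0 and P_D < 1/2, then E[P̂_D] ≠ P_D, i.e., the estimator is biased. -/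
/-- Expectation of `f` under `K` independent Bernoulli bits `y k ~ Bernoulli(α k)`:
the joint pmf of `y : Fin K → Bool` is the product `∏ k, (if y k then α k else 1 - α k)`. -/
def indepBernoulliExp {K : ℕ} (α : Fin K → ℝ) (f : (Fin K → Bool) → ℝ) : ℝ :=
  ∑ y : Fin K → Bool, (∏ k, if y k then α k else 1 - α k) * f y

lemma sum_prod_apply {K : ℕ} (w : Fin K → Bool → ℝ) :
    ∑ y : Fin K → Bool, ∏ k, w k (y k) = ∏ k, ∑ b : Bool, w k b :=
  (Fintype.prod_sum w).symm

lemma indepBernoulliExp_coord {K : ℕ} (α : Fin K → ℝ) (k0 : Fin K) (h : Bool → ℝ) :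
    (∑ y : Fin K → Bool, (∏ k, if y k then α k else 1 - α k) * h (y k0))
      = α k0 * h true + (1 - α k0) * h false := by
  classical
  set w : Fin K → Bool → ℝ := fun k b =>
    if k = k0 then (if b then α k else 1 - α k) * h b else (if b then α k else 1 - α k) with hw
  have lhs_eq : ∀ y : Fin K → Bool,
      (∏ k, if y k then α k else 1 - α k) * h (y k0) = ∏ k, w k (y k) := by
    intro y
    rw [← Finset.mul_prod_erase Finset.univ (fun k => w k (y k)) (Finset.mem_univ k0),
      ← Finset.mul_prod_erase Finset.univ (fun k => if y k then α k else 1 - α k)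
        (Finset.mem_univ k0)]
    have hk0w : w k0 (y k0) = (if y k0 then α k0 else 1 - α k0) * h (y k0) := by simp [hw]
    have htail : (∏ k ∈ Finset.univ.erase k0, w k (y k))
        = ∏ k ∈ Finset.univ.erase k0, (if y k then α k else 1 - α k) :=
      Finset.prod_congr rfl (fun k hk => by simp [hw, (Finset.mem_erase.mp hk).1])
    rw [hk0w, htail]
    ring
  rw [Finset.sum_congr rfl fun y _ => lhs_eq y, sum_prod_apply]
  rw [← Finset.mul_prod_erase Finset.univ (fun k => ∑ b : Bool, w k b) (Finset.mem_univ k0)]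
  have hhead : (∑ b : Bool, w k0 b) = α k0 * h true + (1 - α k0) * h false := by
    simp [hw]
  have h1 : ∀ k ∈ Finset.univ.erase k0, (∑ b : Bool, w k b) = 1 := by
    intro k hk
    simp [hw, (Finset.mem_erase.mp hk).1]
  rw [Finset.prod_congr rfl h1, Finset.prod_const_one, mul_one, hhead]

/-- Mean of the approximate ML estimate `P̂_D = (1/K)·∑ k, ((1 + 2P_{e,k})·y k − P_{e,k})`
for independent `y k ~ Bernoulli(α k)` with `α k = (1 − 2P_{e,k})·P_D + P_{e,k}`:
`E[P̂_D] = (1/K)·∑ k, ((1 − 4P_{e,k}²)·P_D + 2P_{e,k}²)`; in particular, if some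
`P_{e,k} > 0` and `P_D < 1/2`, the estimator is biased, i.e. `E[P̂_D] ≠ P_D`. -/
theorem wu_estimator_mean_and_bias (K : ℕ) (hK : 1 ≤ K) (Pe : Fin K → ℝ)
    (hPe : ∀ k, 0 ≤ Pe k ∧ Pe k ≤ 1 / 2) (PD : ℝ) (hPD : 0 ≤ PD ∧ PD ≤ 1)
    (α : Fin K → ℝ) (hα : ∀ k, α k = (1 - 2 * Pe k) * PD + Pe k) :
    indepBernoulliExp α (fun y =>
        (1 / (K : ℝ)) * ∑ k, ((1 + 2 * Pe k) * (if y k then (1 : ℝ) else 0) - Pe k))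
      = (1 / (K : ℝ)) * ∑ k, ((1 - 4 * (Pe k) ^ 2) * PD + 2 * (Pe k) ^ 2)
    ∧ ((∃ k, 0 < Pe k) → PD < 1 / 2 →
        indepBernoulliExp α (fun y =>
            (1 / (K : ℝ)) * ∑ k, ((1 + 2 * Pe k) * (if y k then (1 : ℝ) else 0) - Pe k))
          ≠ PD) := by
  classical
  have hmean : indepBernoulliExp α (fun y =>
        (1 / (K : ℝ)) * ∑ k, ((1 + 2 * Pe k) * (if y k then (1 : ℝ) else 0) - Pe k))
      = (1 / (K : ℝ)) * ∑ k, ((1 - 4 * (Pe k) ^ 2) * PD + 2 * (Pe k) ^ 2) := by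
    unfold indepBernoulliExp
    have step1 : ∀ y : Fin K → Bool,
        (∏ k, if y k then α k else 1 - α k) *
          ((1 / (K : ℝ)) * ∑ k, ((1 + 2 * Pe k) * (if y k then (1 : ℝ) else 0) - Pe k))
        = (1 / (K : ℝ)) * ∑ k, (∏ j, if y j then α j else 1 - α j) *
            ((1 + 2 * Pe k) * (if y k then (1 : ℝ) else 0) - Pe k) := by
      intro y
      simp only [Finset.mul_sum]
      rw [← Finset.mul_sum]
      rw [Finset.mul_sum]
      apply Finset.sum_congr rfl
      intro k _
      ring
    rw [Finset.sum_congr rfl fun y _ => step1 y, ← Finset.mul_sum,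
      Finset.sum_comm]
    congr 1
    apply Finset.sum_congr rfl
    intro k _
    have hc := indepBernoulliExp_coord α k
      (fun b => (1 + 2 * Pe k) * (if b then (1 : ℝ) else 0) - Pe k)
    simp only [if_true, Bool.false_eq_true, if_false] at hc
    rw [hc, hα k]
    ring
  refine ⟨hmean, ?_⟩
  rintro ⟨k0, hk0⟩ hPDlt
  rw [hmean]
  have hKpos : (0 : ℝ) < K := by exact_mod_cast hK
  have hK0 : (K : ℝ) ≠ 0 := ne_of_gt hKpos
  intro hEq
  have hsum : (∑ k, ((1 - 4 * (Pe k) ^ 2) * PD + 2 * (Pe k) ^ 2))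
      = (K : ℝ) * PD + ∑ k, 2 * (Pe k) ^ 2 * (1 - 2 * PD) := by
    have h2 : ∀ k ∈ Finset.univ, (1 - 4 * (Pe k) ^ 2) * PD + 2 * (Pe k) ^ 2
        = PD + 2 * (Pe k) ^ 2 * (1 - 2 * PD) := by intro k _; ring
    rw [Finset.sum_congr rfl h2, Finset.sum_add_distrib, Finset.sum_const,
      Finset.card_univ, Fintype.card_fin, nsmul_eq_mul]
  have hS : 0 < ∑ k, 2 * (Pe k) ^ 2 * (1 - 2 * PD) := by
    apply Finset.sum_pos'
    · intro k _
      have h1 := (hPe k).1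
      have h2 : (0:ℝ) ≤ 1 - 2 * PD := by linarith
      positivity
    · refine ⟨k0, Finset.mem_univ k0, ?_⟩
      have h2 : (0:ℝ) < 1 - 2 * PD := by linarith
      positivity
  rw [hsum] at hEq
  field_simp at hEq
  simp only [mul_comm PD 2] at hEq
  linarith
end

section
/- Let K ≥ 1, fix P_e ∈ (0, 1/2) and 0 < P_F < P_D < 1, and define α(P) = (1 − 2P_e)·P + P_e and β(P) = 1 − α(P). Then there exist a > 0 and b ∈ ℝ such that for every y : Fin K → {0,1}: ∑_{k=1}^{K} { y_k·ln[α(P_D)/α(P_F)] + (1 − y_k)·ln[β(P_D)/β(P_F)] } = a·(∑_{k=1}^{K} y_k) + b. In other words, when all channel bit-error probabilities are equal, the log-likelihood ratio test statistic is a strictly increasing affine function of the counting rule statistic. -/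
/-- With identical channels (common bit-error probability `P_e`), the log-likelihood
ratio statistic is a strictly increasing affine function of the counting rule
statistic: there exist `a > 0` and `b` such that for every `y ∈ {0,1}^K`,
`∑ k, (y k·ln(α(P_D)/α(P_F)) + (1 − y k)·ln(β(P_D)/β(P_F))) = a·(∑ k, y k) + b`. -/
theorem lrt_equivalent_counting_rule (K : ℕ) (hK : 1 ≤ K) (Pe PF PD : ℝ)
    (hPe0 : 0 < Pe) (hPe2 : Pe < 1 / 2) (hPF : 0 < PF) (hPFD : PF < PD) (hPD : PD < 1) :
    ∃ a : ℝ, 0 < a ∧ ∃ b : ℝ, ∀ y : Fin K → ℝ, (∀ k, y k = 0 ∨ y k = 1) →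
      (∑ k, (y k * Real.log (((1 - 2 * Pe) * PD + Pe) / ((1 - 2 * Pe) * PF + Pe))
        + (1 - y k) * Real.log ((1 - ((1 - 2 * Pe) * PD + Pe))
            / (1 - ((1 - 2 * Pe) * PF + Pe)))))
        = a * (∑ k, y k) + b := by
  set αD : ℝ := (1 - 2 * Pe) * PD + Pe with hαD
  set αF : ℝ := (1 - 2 * Pe) * PF + Pe with hαF
  have hc : 0 < 1 - 2 * Pe := by linarith
  have hαF0 : 0 < αF := by nlinarith
  have hαlt : αF < αD := by nlinarith
  have hαD1 : αD < 1 := by nlinarith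
  have hβD0 : 0 < 1 - αD := by linarith
  have hβlt : 1 - αD < 1 - αF := by linarith
  have hL1 : 0 < Real.log (αD / αF) :=
    Real.log_pos ((one_lt_div hαF0).2 hαlt)
  have hL2 : Real.log ((1 - αD) / (1 - αF)) < 0 :=
    Real.log_neg (div_pos hβD0 (by linarith)) ((div_lt_one (by linarith)).2 hβlt)
  refine ⟨Real.log (αD / αF) - Real.log ((1 - αD) / (1 - αF)), by linarith,
    (K : ℝ) * Real.log ((1 - αD) / (1 - αF)), fun y _ => ?_⟩
  set L1 := Real.log (αD / αF)
  set L2 := Real.log ((1 - αD) / (1 - αF))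
  have : ∀ k : Fin K, y k * L1 + (1 - y k) * L2 = (L1 - L2) * y k + L2 := fun k => by ring
  rw [Finset.sum_congr rfl (fun k _ => this k), Finset.sum_add_distrib,
    ← Finset.mul_sum, Finset.sum_const, Finset.card_univ, Fintype.card_fin,
    nsmul_eq_mul]
end

section
/- Let K ≥ 2 and let p : Fin K → ℝ with 0 ≤ p_k ≤ 1/2 for all k, and suppose p is not constant (there exist k, k' with p_k ≠ p_{k'}). Then there do NOT exist a > 0 and b ∈ ℝ such that for every y : Fin K → {0,1}: ∑_{k=1}^{K} (1 − 2p_k)·y_k = a·(∑_{k=1}^{K} (1 + 2p_k)·y_k) + b. -/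
/-- Negative half of Proposition 1: when the `p_k ∈ [0, 1/2]` are not all equal,
the statistic `∑ k (1 − 2p_k)·y_k` (linearized LRT) is NOT an increasing affine
function of the Wu statistic `∑ k (1 + 2p_k)·y_k` over `y ∈ {0,1}^K`. -/
theorem wu_not_equivalent_linearized_lrt (K : ℕ) (hK : 2 ≤ K) (p : Fin K → ℝ)
    (hp : ∀ k, 0 ≤ p k ∧ p k ≤ 1 / 2) (hnc : ∃ k k' : Fin K, p k ≠ p k') :
    ¬ ∃ a : ℝ, 0 < a ∧ ∃ b : ℝ, ∀ y : Fin K → ℝ, (∀ k, y k = 0 ∨ y k = 1) →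
        ∑ k, (1 - 2 * p k) * y k = a * (∑ k, (1 + 2 * p k) * y k) + b := by
  rintro ⟨a, ha, b, h⟩
  obtain ⟨k, k', hkk⟩ := hnc
  have h0 := h (fun _ => 0) (fun _ => Or.inl rfl)
  simp at h0
  have key : ∀ j : Fin K, 1 - 2 * p j = a * (1 + 2 * p j) + b := by
    intro j
    have := h (fun i => if i = j then 1 else 0)
      (fun i => by by_cases hi : i = j <;> simp [hi])
    simpa [Finset.sum_ite_eq', mul_ite] using this
  have h1 := key k
  have h2 := key k'
  have hk0 := (hp k).1
  have hk'0 := (hp k').1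
  have hd : (1 + a) * (p k - p k') = 0 := by nlinarith [h1, h2, h0]
  rcases mul_eq_zero.1 hd with h | h
  · linarith
  · exact hkk (by linarith [sub_eq_zero.1 h])
end
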